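/- Let n ≥ 3 and let X_1, ..., X_n be i.i.d. random variables uniformly distributed on [0, 1] on a probability space (Ω, 𝓕, P), with order statistics X_{1:n} ≤ ... ≤ X_{n:n}. Then E[(X_{n:n} − E[X_{n:n} | σ(X_{n-1:n})])²] ≤ E[(X_{n:n} − E[X_{n:n} | σ(X_{n-2:n})])²]; i.e., the second largest order statistic yields a better mean-square predictor of the maximum than the third largest. -/

import Mathlib

/-! Split the sample space according to the permutation `σ` sorting the sample, which is almost
surely unique. On the piece of `σ`, the maximum is the coordinate `T = X (σ (n - 1))`, and the piece
is `{T > X_{n-1:n}}` intersected with an event determined by the other coordinates, which there also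
determine `X_{n-1:n}` and `X_{n-2:n}`. As `T` is uniform on `[0, 1]` and independent of the other
coordinates, its mean over `(X_{n-1:n}, 1]` is the midpoint; hence
`E[X_{n:n} | X_{n-1:n}, X_{n-2:n}] = (X_{n-1:n} + 1) / 2`. This is a function of `X_{n-1:n}` alone,
so `X_{n-1:n}` predicts `X_{n:n}` as well as the pair does, while by the law of total variance
conditioning on the smaller σ-algebra of `X_{n-2:n}` can only increase the mean square error. -/

open MeasureTheory ProbabilityTheory

/-- `orderStat X k ω` is the `(k+1)`-th smallest value among `X 0 ω, …, X (n-1) ω`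
(0-indexed, in increasing order); thus `orderStat X (n-1)` is the maximum `X_{n:n}`,
`orderStat X (n-2)` is `X_{n-1:n}` and `orderStat X (n-3)` is `X_{n-2:n}`. -/
noncomputable def orderStat {Ω : Type*} {n : ℕ} (X : Fin n → Ω → ℝ) (k : ℕ)
    (ω : Ω) : ℝ :=
  ((Multiset.map (fun i => X i ω) Finset.univ.val).sort (· ≤ ·)).getD k 0

section OrderStat

variable {Ω : Type*} {n : ℕ}

lemma Multiset.sort_map_univ_eq_ofFn {α : Type*} [LinearOrder α] (v : Fin n → α)
    {σ : Equiv.Perm (Fin n)} (hσ : Monotone (v ∘ σ)) :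
    (Multiset.map v Finset.univ.val).sort (· ≤ ·) = List.ofFn (v ∘ σ) := by
  rw [Fin.univ_val_map, ← Multiset.coe_eq_coe.2 (σ.ofFn_comp_perm v), Multiset.coe_sort]
  exact List.mergeSort_eq_self _ hσ.sortedLE_ofFn.pairwise

lemma orderStat_eq_of_monotone (X : Fin n → Ω → ℝ) {ω : Ω} {σ : Equiv.Perm (Fin n)}
    (hσ : Monotone fun a => X (σ a) ω) (k : Fin n) : orderStat X k ω = X (σ k) ω := by
  rw [orderStat, Multiset.sort_map_univ_eq_ofFn _ hσ, List.getD_eq_getElem _ _ (by simp),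
    List.getElem_ofFn]
  rfl

lemma orderStat_mem_of_forall_mem (X : Fin n → Ω → ℝ) {ω : Ω} {s : Set ℝ}
    (h : ∀ i, X i ω ∈ s) (k : Fin n) : orderStat X k ω ∈ s := by
  rw [orderStat_eq_of_monotone X (Tuple.monotone_sort fun i => X i ω)]
  exact h _

lemma Equiv.Perm.eq_of_strictMono_comp {α : Type*} [LinearOrder α] {v : Fin n → α}
    {σ τ : Equiv.Perm (Fin n)} (hσ : StrictMono (v ∘ σ)) (hτ : StrictMono (v ∘ τ)) : σ = τ := by
  have hv : Function.Injective v := by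
    simpa [Function.comp_assoc] using hσ.injective.comp σ.symm.injective
  exact Equiv.ext fun a => hv (congrFun (Tuple.unique_monotone hσ.monotone hτ.monotone) a)

lemma exists_strictMono_comp_perm {α : Type*} [LinearOrder α] {v : Fin n → α}
    (hv : Function.Injective v) : ∃ σ : Equiv.Perm (Fin n), StrictMono (v ∘ σ) :=
  ⟨Tuple.sort v, (Tuple.monotone_sort v).strictMono_of_injective
    (hv.comp (Tuple.sort v).injective)⟩

lemma Fin.strictMono_iff_castSucc_and_lt_last {α : Type*} [Preorder α] {m : ℕ}
    {f : Fin (m + 2) → α} :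
    StrictMono f ↔
      StrictMono (fun a : Fin (m + 1) => f a.castSucc) ∧
        f (Fin.last m).castSucc < f (Fin.last _) := by
  rw [Fin.strictMono_iff_lt_succ, Fin.strictMono_iff_lt_succ, Fin.forall_fin_succ']
  simp only [Fin.succ_last, Fin.succ_castSucc]

lemma strictMono_comp_perm_and_orderStat_mem_iff {m : ℕ} (X : Fin (m + 3) → Ω → ℝ)
    (σ : Equiv.Perm (Fin (m + 3))) (ω : Ω) (A : Set (ℝ × ℝ)) :
    (StrictMono (fun a => X (σ a) ω) ∧ (orderStat X (m + 1) ω, orderStat X m ω) ∈ A) ↔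
      (StrictMono (fun a : Fin (m + 2) => X (σ a.castSucc) ω) ∧
          (X (σ (Fin.last (m + 1)).castSucc) ω, X (σ (Fin.last m).castSucc.castSucc) ω) ∈ A) ∧
        X (σ (Fin.last (m + 1)).castSucc) ω < X (σ (Fin.last (m + 2))) ω := by
  have hos (hσ : StrictMono fun a => X (σ a) ω) : (orderStat X (m + 1) ω, orderStat X m ω)
      = (X (σ (Fin.last (m + 1)).castSucc) ω, X (σ (Fin.last m).castSucc.castSucc) ω) :=
    Prod.ext (orderStat_eq_of_monotone X hσ.monotone (Fin.last _).castSucc)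
      (orderStat_eq_of_monotone X hσ.monotone (Fin.last _).castSucc.castSucc)
  constructor
  · rintro ⟨hσ, hA⟩
    obtain ⟨hchain, hlt⟩ := Fin.strictMono_iff_castSucc_and_lt_last.1 hσ
    exact ⟨⟨hchain, by rwa [hos hσ] at hA⟩, hlt⟩
  · rintro ⟨⟨hchain, hA⟩, hlt⟩
    have hσ : StrictMono fun a => X (σ a) ω :=
      Fin.strictMono_iff_castSucc_and_lt_last.2 ⟨hchain, hlt⟩
    exact ⟨hσ, by rwa [hos hσ]⟩

variable [MeasurableSpace Ω]

lemma measurableSet_monotone {ι : Type*} [Preorder ι] [Countable ι] {X : ι → Ω → ℝ}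
    (hX : ∀ i, Measurable (X i)) : MeasurableSet {ω | Monotone fun a => X a ω} := by
  simp only [Monotone, Set.ofPred_forall]
  exact .iInter fun a => .iInter fun b => .iInter fun _ => measurableSet_le (hX a) (hX b)

lemma measurableSet_strictMono {ι : Type*} [Preorder ι] [Countable ι] {X : ι → Ω → ℝ}
    (hX : ∀ i, Measurable (X i)) : MeasurableSet {ω | StrictMono fun a => X a ω} := by
  simp only [StrictMono, Set.ofPred_forall]
  exact .iInter fun a => .iInter fun b => .iInter fun _ => measurableSet_lt (hX a) (hX b)

-- Every sample is sorted by some permutation `σ`, and there `orderStat X k = X (σ k)`.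
lemma measurable_orderStat {X : Fin n → Ω → ℝ} (hX : ∀ i, Measurable (X i)) {k : ℕ}
    (hk : k < n) : Measurable (orderStat X k) := by
  lift k to Fin n using hk
  intro B hB
  have : orderStat X k ⁻¹' B
      = ⋃ σ : Equiv.Perm (Fin n), {ω | Monotone fun a => X (σ a) ω} ∩ X (σ k) ⁻¹' B := by
    ext ω
    simp only [Set.mem_preimage, Set.mem_iUnion, Set.mem_inter_iff, Set.mem_ofPred_eq]
    constructor
    · intro h
      have hσ := Tuple.monotone_sort fun i => X i ω
      exact ⟨_, hσ, by rwa [← orderStat_eq_of_monotone X hσ]⟩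
    · rintro ⟨σ, hσ, h⟩
      rwa [orderStat_eq_of_monotone X hσ]
  rw [this]
  exact .iUnion fun σ => (measurableSet_monotone fun a => hX (σ a)).inter (hX _ hB)

end OrderStat

section Independence

variable {Ω : Type*} [MeasurableSpace Ω] {P : Measure Ω}

lemma ae_mem_of_map_eq_restrict {β : Type*} [MeasurableSpace β] {T : Ω → β} {μ : Measure β}
    {s : Set β} (hT : AEMeasurable T P) (hs : MeasurableSet s) (h : P.map T = μ.restrict s) :
    ∀ᵐ ω ∂P, T ω ∈ s :=
  (ae_map_iff hT hs).1 (h ▸ ae_restrict_mem hs)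

lemma ProbabilityTheory.iIndepFun.indepFun_update {ι β : Type*} [Fintype ι] [DecidableEq ι]
    [MeasurableSpace β] {X : ι → Ω → β} (h : iIndepFun X P) (hX : ∀ i, Measurable (X i))
    (i : ι) (c : β) : IndepFun (X i) (fun ω => Function.update (fun j => X j ω) i c) P := by
  have hext : Measurable fun (r : ({i}ᶜ : Finset ι) → β) (j : ι) =>
      if hj : j = i then c else r ⟨j, by simpa using hj⟩ := by
    refine measurable_pi_lambda _ fun j => ?_
    by_cases hj : j = i
    · simp only [hj, dif_pos]; exact measurable_const
    · simp only [hj, dif_neg, not_false_eq_true]; exact measurable_pi_apply _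
  convert (h.indepFun_finset {i} {i}ᶜ (by simp) hX).comp
    (measurable_pi_apply ⟨i, Finset.mem_singleton_self i⟩) hext using 1
  · rfl
  · ext ω j
    by_cases hj : j = i <;> simp [Function.update, hj]

variable [IsProbabilityMeasure P]

lemma ProbabilityTheory.IndepFun.ae_ne {T U : Ω → ℝ} (h : IndepFun T U P) (hT : Measurable T)
    (hU : Measurable U) [NullSingletonClass (P.map U)] : ∀ᵐ ω ∂P, T ω ≠ U ω := by
  have hD : MeasurableSet {p : ℝ × ℝ | p.1 = p.2} :=
    measurableSet_eq_fun measurable_fst measurable_snd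
  rw [ae_iff]
  simp only [ne_eq, not_not]
  change P ((fun ω => (T ω, U ω)) ⁻¹' {p : ℝ × ℝ | p.1 = p.2}) = 0
  rw [← Measure.map_apply (hT.prodMk hU) hD,
    (indepFun_iff_map_prod_eq_prod_map_map hT.aemeasurable hU.aemeasurable).1 h,
    Measure.prod_apply hD]
  simp [Set.preimage, measure_singleton]

lemma ProbabilityTheory.iIndepFun.ae_injective {ι : Type*} [Countable ι] {X : ι → Ω → ℝ}
    (h : iIndepFun X P) (hX : ∀ i, Measurable (X i)) [∀ i, NullSingletonClass (P.map (X i))] :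
    ∀ᵐ ω ∂P, Function.Injective fun i => X i ω := by
  have hinj : ∀ᵐ ω ∂P, ∀ i j, X i ω = X j ω → i = j :=
    ae_all_iff.2 fun i => ae_all_iff.2 fun j => by
      by_cases hij : i = j
      · exact .of_forall fun _ _ => hij
      · exact ((h.indepFun hij).ae_ne (hX i) (hX j)).mono fun _ hne heq => absurd heq hne
  filter_upwards [hinj] with ω hω i j using hω i j

end Independence

section ConditionalExpectation

variable {Ω : Type*} {m₁ m₂ m₀ : MeasurableSpace Ω} {μ : Measure[m₀] Ω} [IsProbabilityMeasure μ]
  {Y : Ω → ℝ}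

lemma integral_sq_sub_condExp (hm : m₁ ≤ m₀) (hY : MemLp Y 2 μ) :
    ∫ ω, (Y ω - μ[Y | m₁] ω) ^ 2 ∂μ = Var[Y; μ] - Var[μ[Y | m₁]; μ] := by
  rw [← integral_condVar_add_variance_condExp hm hY, condVar, integral_condExp hm]
  simp

lemma variance_condExp_le_of_le (h₁₂ : m₁ ≤ m₂) (h₂ : m₂ ≤ m₀) (hY : MemLp Y 2 μ) :
    Var[μ[Y | m₁]; μ] ≤ Var[μ[Y | m₂]; μ] := by
  have htotal :=
    integral_condVar_add_variance_condExp (h₁₂.trans h₂) (hY.condExp (m := m₂) one_le_two)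
  rw [variance_congr (condExp_condExp_of_le h₁₂ h₂), condVar,
    integral_condExp (h₁₂.trans h₂)] at htotal
  have : 0 ≤ ∫ ω, ((μ[Y | m₂] - μ[μ[Y | m₂] | m₁]) ^ 2) ω ∂μ :=
    integral_nonneg fun ω => sq_nonneg _
  linarith

lemma integral_sq_sub_condExp_le_of_le (h₁₂ : m₁ ≤ m₂) (h₂ : m₂ ≤ m₀) (hY : MemLp Y 2 μ) :
    ∫ ω, (Y ω - μ[Y | m₂] ω) ^ 2 ∂μ ≤ ∫ ω, (Y ω - μ[Y | m₁] ω) ^ 2 ∂μ := by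
  rw [integral_sq_sub_condExp h₂ hY, integral_sq_sub_condExp (h₁₂.trans h₂) hY]
  linarith [variance_condExp_le_of_le h₁₂ h₂ hY]

lemma condExp_ae_eq_condExp_of_aestronglyMeasurable (h₁₂ : m₁ ≤ m₂) (h₂ : m₂ ≤ m₀)
    (h : AEStronglyMeasurable[m₁] (μ[Y | m₂]) μ) : μ[Y | m₁] =ᵐ[μ] μ[Y | m₂] :=
  (condExp_condExp_of_le h₁₂ h₂).symm.trans
    (condExp_of_aestronglyMeasurable' (h₁₂.trans h₂) h integrable_condExp)

end ConditionalExpectation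

section Uniform

lemma intervalIntegral.integral_sub_midpoint (a b : ℝ) :
    ∫ t in a..b, (t - (a + b) / 2) = 0 := by
  simp [integral_id]
  ring

lemma setIntegral_Icc_indicator_Ioi_sub_midpoint {c : ℝ} (hc : c ∈ Set.Icc (0 : ℝ) 1) :
    ∫ t in Set.Icc (0 : ℝ) 1, (Set.Ioi c).indicator (fun t => t - (c + 1) / 2) t = 0 := by
  have hIoc : Set.Ioi c ∩ Set.Icc 0 1 = Set.Ioc c 1 := by
    ext t
    simp only [Set.mem_inter_iff, Set.mem_Ioi, Set.mem_Icc, Set.mem_Ioc]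
    grind
  rw [integral_indicator measurableSet_Ioi, Measure.restrict_restrict measurableSet_Ioi, hIoc,
    ← intervalIntegral.integral_of_le hc.2]
  exact intervalIntegral.integral_sub_midpoint c 1

variable {Ω β : Type*} [MeasurableSpace Ω] [MeasurableSpace β] {P : Measure Ω}
  [IsProbabilityMeasure P]

-- Conditionally on `V`, the variable `T` is uniform, so its mean on `(M V, 1]` is the midpoint.
lemma setIntegral_sub_midpoint_eq_zero {T : Ω → ℝ} {V : Ω → β} (hT : Measurable T)
    (hV : Measurable V) (hTV : IndepFun T V P)
    (hlaw : P.map T = volume.restrict (Set.Icc (0 : ℝ) 1))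
    {M : β → ℝ} (hM : Measurable M) (hMV : ∀ᵐ ω ∂P, M (V ω) ∈ Set.Icc (0 : ℝ) 1)
    {B : Set β} (hB : MeasurableSet B) :
    ∫ ω in V ⁻¹' B ∩ {ω | M (V ω) < T ω}, (T ω - (M (V ω) + 1) / 2) ∂P = 0 := by
  set S : Set (ℝ × β) := Prod.snd ⁻¹' B ∩ {p | M p.2 < p.1}
  set Φ : ℝ × β → ℝ := S.indicator fun p => p.1 - (M p.2 + 1) / 2
  have hS : MeasurableSet S :=
    (measurable_snd hB).inter (measurableSet_lt (hM.comp measurable_snd) measurable_fst)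
  have hΦ : Measurable Φ :=
    (measurable_fst.sub ((hM.comp measurable_snd).add_const 1 |>.div_const 2)).indicator hS
  have hTV' : Measurable fun ω => (T ω, V ω) := hT.prodMk hV
  have hmap : P.map (fun ω => (T ω, V ω))
      = (volume.restrict (Set.Icc (0 : ℝ) 1)).prod (P.map V) := by
    rw [(indepFun_iff_map_prod_eq_prod_map_map hT.aemeasurable hV.aemeasurable).1 hTV, hlaw]
  have hΦint : Integrable Φ ((volume.restrict (Set.Icc (0 : ℝ) 1)).prod (P.map V)) := by
    rw [← hmap, integrable_map_measure hΦ.aestronglyMeasurable hTV'.aemeasurable]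
    refine .of_bound (hΦ.comp hTV').aestronglyMeasurable 1 ?_
    filter_upwards [ae_mem_of_map_eq_restrict hT.aemeasurable measurableSet_Icc hlaw, hMV]
      with ω hTω hMω
    simp only [Function.comp_apply, Φ, Set.indicator]
    split_ifs
    · rw [Real.norm_eq_abs, abs_le]
      constructor <;> linarith [hTω.1, hTω.2, hMω.1, hMω.2]
    · simp
  have hMν : ∀ᵐ b ∂P.map V, M b ∈ Set.Icc (0 : ℝ) 1 :=
    (ae_map_iff hV.aemeasurable (hM measurableSet_Icc)).2 hMV
  have hset : MeasurableSet (V ⁻¹' B ∩ {ω | M (V ω) < T ω}) :=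
    (hV hB).inter (measurableSet_lt (hM.comp hV) hT)
  calc ∫ ω in V ⁻¹' B ∩ {ω | M (V ω) < T ω}, (T ω - (M (V ω) + 1) / 2) ∂P
      = ∫ ω, Φ (T ω, V ω) ∂P := by
        rw [← integral_indicator hset]
        rfl
    _ = ∫ b, (∫ t in Set.Icc (0 : ℝ) 1, Φ (t, b)) ∂P.map V := by
        rw [← integral_map hTV'.aemeasurable hΦ.aestronglyMeasurable, hmap,
          integral_prod_symm Φ hΦint]
    _ = 0 := by
        refine integral_eq_zero_of_ae (hMν.mono fun b hb => ?_)
        show ∫ t in Set.Icc (0 : ℝ) 1, Φ (t, b) = 0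
        by_cases hbB : b ∈ B
        · have hΦb : (fun t => Φ (t, b))
              = (Set.Ioi (M b)).indicator fun t => t - (M b + 1) / 2 := by
            ext t
            simp [Φ, S, Set.indicator, hbB]
          rw [hΦb, setIntegral_Icc_indicator_Ioi_sub_midpoint hb]
        · simp [Φ, S, hbB]

end Uniform

section UniformOrderStat

variable {Ω : Type*} [MeasurableSpace Ω] {P : Measure Ω}

lemma ae_forall_mem_Icc_of_uniform {n : ℕ} {X : Fin n → Ω → ℝ} (hX : ∀ i, Measurable (X i))
    (hlaw : ∀ i, P.map (X i) = volume.restrict (Set.Icc (0 : ℝ) 1)) :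
    ∀ᵐ ω ∂P, ∀ i, X i ω ∈ Set.Icc (0 : ℝ) 1 :=
  ae_all_iff.2 fun i => ae_mem_of_map_eq_restrict (hX i).aemeasurable measurableSet_Icc (hlaw i)

variable [IsProbabilityMeasure P]

lemma memLp_orderStat_of_uniform {n : ℕ} {X : Fin n → Ω → ℝ} (hX : ∀ i, Measurable (X i))
    (hlaw : ∀ i, P.map (X i) = volume.restrict (Set.Icc (0 : ℝ) 1)) {k : ℕ} (hk : k < n)
    (p : ENNReal) : MemLp (orderStat X k) p P :=
  memLp_of_bounded ((ae_forall_mem_Icc_of_uniform hX hlaw).mono fun _ h =>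
    orderStat_mem_of_forall_mem X h ⟨k, hk⟩) (measurable_orderStat hX hk).aestronglyMeasurable p

lemma ae_injective_of_uniform {n : ℕ} {X : Fin n → Ω → ℝ} (hX : ∀ i, Measurable (X i))
    (hindep : iIndepFun X P) (hlaw : ∀ i, P.map (X i) = volume.restrict (Set.Icc (0 : ℝ) 1)) :
    ∀ᵐ ω ∂P, Function.Injective fun i => X i ω := by
  have (i : Fin n) : NullSingletonClass (P.map (X i)) := by rw [hlaw i]; infer_instance
  exact hindep.ae_injective hX

variable {m : ℕ} {X : Fin (m + 3) → Ω → ℝ}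

lemma setIntegral_strictMono_inter_eq_zero (hX : ∀ i, Measurable (X i)) (hindep : iIndepFun X P)
    (hlaw : ∀ i, P.map (X i) = volume.restrict (Set.Icc (0 : ℝ) 1))
    (σ : Equiv.Perm (Fin (m + 3))) {A : Set (ℝ × ℝ)} (hA : MeasurableSet A) :
    ∫ ω in {ω | StrictMono fun a => X (σ a) ω} ∩
        (fun ω => (orderStat X (m + 1) ω, orderStat X m ω)) ⁻¹' A,
      (orderStat X (m + 2) ω - (orderStat X (m + 1) ω + 1) / 2) ∂P = 0 := by
  set i := σ (Fin.last (m + 2))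
  set j := σ (Fin.last (m + 1)).castSucc
  set k := σ (Fin.last m).castSucc.castSucc
  -- `V ω` is the sample with its top coordinate overwritten, hence independent of `X i`.
  set V : Ω → Fin (m + 3) → ℝ := fun ω => Function.update (fun l => X l ω) i 0
  have hV (ω : Ω) (a : Fin (m + 2)) : V ω (σ a.castSucc) = X (σ a.castSucc) ω :=
    Function.update_of_ne (σ.injective.ne (Fin.castSucc_lt_last a).ne) _ _
  set B : Set (Fin (m + 3) → ℝ) :=
    {v | StrictMono (fun a : Fin (m + 2) => v (σ a.castSucc)) ∧ (v j, v k) ∈ A}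
  have hB : MeasurableSet B :=
    (measurableSet_strictMono fun a => measurable_pi_apply _).inter
      ((measurable_pi_apply j).prodMk (measurable_pi_apply k) hA)
  have hset : {ω | StrictMono fun a => X (σ a) ω} ∩
      (fun ω => (orderStat X (m + 1) ω, orderStat X m ω)) ⁻¹' A
        = V ⁻¹' B ∩ {ω | V ω j < X i ω} := by
    ext ω
    simp only [Set.mem_inter_iff, Set.mem_preimage, Set.mem_ofPred_eq, B, j, k, hV]
    exact strictMono_comp_perm_and_orderStat_mem_iff X σ ω A
  have hmeas : MeasurableSet ({ω | StrictMono fun a => X (σ a) ω} ∩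
      (fun ω => (orderStat X (m + 1) ω, orderStat X m ω)) ⁻¹' A) :=
    (measurableSet_strictMono fun a => hX (σ a)).inter
      ((measurable_orderStat hX (by omega)).prodMk (measurable_orderStat hX (by omega)) hA)
  have hMV : ∀ᵐ ω ∂P, V ω j ∈ Set.Icc (0 : ℝ) 1 :=
    (ae_forall_mem_Icc_of_uniform hX hlaw).mono fun ω h => (hV ω _).symm ▸ h j
  rw [setIntegral_congr_fun hmeas (g := fun ω => X i ω - (V ω j + 1) / 2) fun ω hω => by
    have hmax : orderStat X (m + 2) ω = X i ω :=
      orderStat_eq_of_monotone X hω.1.monotone (Fin.last _)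
    have hsecond : orderStat X (m + 1) ω = V ω j :=
      (orderStat_eq_of_monotone X hω.1.monotone (Fin.last _).castSucc).trans (hV ω _).symm
    simp only [hmax, hsecond], hset]
  exact setIntegral_sub_midpoint_eq_zero (hX i) (by fun_prop) (hindep.indepFun_update hX i 0)
    (hlaw i) (measurable_pi_apply j) hMV hB

lemma setIntegral_orderStat_max_sub_eq_zero (hX : ∀ i, Measurable (X i))
    (hindep : iIndepFun X P) (hlaw : ∀ i, P.map (X i) = volume.restrict (Set.Icc (0 : ℝ) 1))
    {A : Set (ℝ × ℝ)} (hA : MeasurableSet A) :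
    ∫ ω in (fun ω => (orderStat X (m + 1) ω, orderStat X m ω)) ⁻¹' A,
      (orderStat X (m + 2) ω - (orderStat X (m + 1) ω + 1) / 2) ∂P = 0 := by
  set S := (fun ω => (orderStat X (m + 1) ω, orderStat X m ω)) ⁻¹' A
  set E : Equiv.Perm (Fin (m + 3)) → Set Ω := fun σ => {ω | StrictMono fun a => X (σ a) ω}
  have hcover : S =ᵐ[P] ⋃ σ, E σ ∩ S := by
    refine Filter.eventuallyEq_set.2 ?_
    filter_upwards [ae_injective_of_uniform hX hindep hlaw] with ω hω
    obtain ⟨σ, hσ⟩ := exists_strictMono_comp_perm hω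
    simp only [Set.mem_iUnion, Set.mem_inter_iff]
    exact ⟨fun h => ⟨σ, hσ, h⟩, fun ⟨_, _, h⟩ => h⟩
  have hY : Integrable (orderStat X (m + 2)) P :=
    (memLp_orderStat_of_uniform hX hlaw (by omega) 1).integrable le_rfl
  have hW : Integrable (orderStat X (m + 1)) P :=
    (memLp_orderStat_of_uniform hX hlaw (by omega) 1).integrable le_rfl
  have hint : Integrable (fun ω => orderStat X (m + 2) ω - (orderStat X (m + 1) ω + 1) / 2) P :=
    hY.sub ((hW.add (integrable_const 1)).div_const 2)
  rw [setIntegral_congr_set hcover, integral_iUnion_fintype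
    (fun σ => (measurableSet_strictMono fun a => hX (σ a)).inter
      ((measurable_orderStat hX (by omega)).prodMk (measurable_orderStat hX (by omega)) hA))
    (fun σ τ hστ => Set.disjoint_left.2 fun ω (h₁ : ω ∈ E σ ∩ S) (h₂ : ω ∈ E τ ∩ S) =>
      hστ (Equiv.Perm.eq_of_strictMono_comp (v := fun i => X i ω) h₁.1 h₂.1))
    (fun σ => hint.integrableOn)]
  exact Finset.sum_eq_zero fun σ _ => setIntegral_strictMono_inter_eq_zero hX hindep hlaw σ hA

lemma condExp_orderStat_max_ae_eq (hX : ∀ i, Measurable (X i)) (hindep : iIndepFun X P)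
    (hlaw : ∀ i, P.map (X i) = volume.restrict (Set.Icc (0 : ℝ) 1)) :
    P[orderStat X (m + 2) | MeasurableSpace.comap
        (fun ω => (orderStat X (m + 1) ω, orderStat X m ω)) inferInstance]
      =ᵐ[P] fun ω => (orderStat X (m + 1) ω + 1) / 2 := by
  have hpair : Measurable fun ω => (orderStat X (m + 1) ω, orderStat X m ω) :=
    (measurable_orderStat hX (by omega)).prodMk (measurable_orderStat hX (by omega))
  have hY : Integrable (orderStat X (m + 2)) P :=
    (memLp_orderStat_of_uniform hX hlaw (by omega) 1).integrable le_rfl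
  have hg : Integrable (fun ω => (orderStat X (m + 1) ω + 1) / 2) P :=
    (((memLp_orderStat_of_uniform hX hlaw (by omega) 1).integrable le_rfl).add
      (integrable_const 1)).div_const 2
  refine (ae_eq_condExp_of_forall_setIntegral_eq hpair.comap_le hY
    (fun s _ _ => hg.integrableOn) ?_ ?_).symm
  · rintro s ⟨A, hA, rfl⟩ -
    have := setIntegral_orderStat_max_sub_eq_zero hX hindep hlaw hA
    rw [integral_sub hY.integrableOn hg.integrableOn] at this
    linarith
  · exact ((measurable_fst.comp (comap_measurable _)).add_const 1
      |>.div_const 2).aestronglyMeasurable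

end UniformOrderStat

/-- For `n ≥ 3` i.i.d. uniform(0,1) random variables, the second
largest order statistic yields a better mean-square predictor of the maximum than the
third largest:
`E[(X_{n:n} − E[X_{n:n} | σ(X_{n-1:n})])²] ≤ E[(X_{n:n} − E[X_{n:n} | σ(X_{n-2:n})])²]`. -/
theorem second_largest_better_predictor_of_max_uniform
    {Ω : Type*} [MeasurableSpace Ω] {P : Measure Ω} [IsProbabilityMeasure P]
    {n : ℕ} (hn : 3 ≤ n) (X : Fin n → Ω → ℝ)
    (hX : ∀ i, Measurable (X i))
    (hindep : iIndepFun X P)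
    (hlaw : ∀ i, Measure.map (X i) P = volume.restrict (Set.Icc (0 : ℝ) 1)) :
    ∫ ω, (orderStat X (n - 1) ω -
        (P[orderStat X (n - 1) |
          MeasurableSpace.comap (orderStat X (n - 2)) (borel ℝ)]) ω) ^ 2 ∂P
      ≤ ∫ ω, (orderStat X (n - 1) ω -
        (P[orderStat X (n - 1) |
          MeasurableSpace.comap (orderStat X (n - 3)) (borel ℝ)]) ω) ^ 2 ∂P := by
  obtain ⟨m, rfl⟩ := Nat.exists_eq_add_of_le' hn
  rw [show m + 3 - 1 = m + 2 by omega, show m + 3 - 2 = m + 1 by omega, Nat.add_sub_cancel]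
  set pair := fun ω => (orderStat X (m + 1) ω, orderStat X m ω)
  have hpair : Measurable pair :=
    (measurable_orderStat hX (by omega)).prodMk (measurable_orderStat hX (by omega))
  have hle₂ : MeasurableSpace.comap (orderStat X (m + 1)) (borel ℝ) ≤ .comap pair inferInstance :=
    (measurable_fst.comp (comap_measurable pair)).comap_le
  have hle₃ : MeasurableSpace.comap (orderStat X m) (borel ℝ) ≤ .comap pair inferInstance :=
    (measurable_snd.comp (comap_measurable pair)).comap_le
  have hsecond := condExp_ae_eq_condExp_of_aestronglyMeasurable hle₂ hpair.comap_le
    ((((comap_measurable _).add_const 1).div_const 2).aestronglyMeasurable.congr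
      (condExp_orderStat_max_ae_eq hX hindep hlaw).symm)
  calc _ = ∫ ω, (orderStat X (m + 2) ω -
          (P[orderStat X (m + 2) | .comap pair inferInstance]) ω) ^ 2 ∂P :=
        integral_congr_ae (hsecond.mono fun ω h => by rw [h])
    _ ≤ _ := integral_sq_sub_condExp_le_of_le hle₃ hpair.comap_le
        (memLp_orderStat_of_uniform hX hlaw (by omega) 2)
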